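/- arXiv:1512.00378 — 2 statements merged into one kernel-verified Lean document; each statement's English description precedes it below -/
import Mathlib

section
/- Suppose sus_p^k = S[i..p] is a strict right extension of lsus_i^k (i.e., the ending position of lsus_i^k is less than p). Then p ≥ 2, sus_{p−1}^k = S[i..p−1] (so the rightmost character of sus_{p−1}^k is S[p−1]), and sus_p^k equals sus_{p−1}^k appended by the character S[p]. -/
/-- Number of mismatches between the length-`ℓ` windows of `S` starting at `i` and `j`. -/
def mis {α : Type*} [DecidableEq α] (S : ℕ → α) (i j ℓ : ℕ) : ℕ :=
  ((Finset.range ℓ).filter (fun d => S (i + d) ≠ S (j + d))).card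

/-- `S[i..j]` is a `k`-mismatch repeat (there is another same-length window within
Hamming distance `k`). -/
def kRepeat {α : Type*} [DecidableEq α] (S : ℕ → α) (n k i j : ℕ) : Prop :=
  ∃ i', i' ≠ i ∧ 1 ≤ i' ∧ i' + (j - i) ≤ n ∧ mis S i i' (j - i + 1) ≤ k

/-- `S[i..j]` is `k`-mismatch unique. -/
def kUnique {α : Type*} [DecidableEq α] (S : ℕ → α) (n k i j : ℕ) : Prop :=
  ¬ kRepeat S n k i j

/-- `S[i..e]` is the `k`-mismatch LSUS starting at `i`: it is `k`-mismatch unique and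
every proper prefix `S[i..j]`, `i ≤ j < e`, is a `k`-mismatch repeat. -/
def isLSUS {α : Type*} [DecidableEq α] (S : ℕ → α) (n k i e : ℕ) : Prop :=
  1 ≤ i ∧ i ≤ e ∧ e ≤ n ∧ kUnique S n k i e ∧ ∀ j, i ≤ j → j < e → kRepeat S n k i j

/-- `S[i..j]` is a `k`-mismatch SUS covering position `p`: a minimum-length
`k`-mismatch unique substring covering `p`. -/
def isSUS {α : Type*} [DecidableEq α] (S : ℕ → α) (n k p i j : ℕ) : Prop :=
  1 ≤ i ∧ i ≤ p ∧ p ≤ j ∧ j ≤ n ∧ kUnique S n k i j ∧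
    ∀ i' j', 1 ≤ i' → i' ≤ p → p ≤ j' → j' ≤ n → kUnique S n k i' j' → j - i ≤ j' - i'


lemma mis_mono {α : Type*} [DecidableEq α] (S : ℕ → α) (i j : ℕ) {ℓ ℓ' : ℕ} (h : ℓ ≤ ℓ') :
    mis S i j ℓ ≤ mis S i j ℓ' := by
  apply Finset.card_le_card
  exact Finset.filter_subset_filter _ (Finset.range_subset_range.mpr h)

lemma kUnique_extend {α : Type*} [DecidableEq α] {S : ℕ → α} {n k i j j' : ℕ}
    (hu : kUnique S n k i j) (hjj : j ≤ j') : kUnique S n k i j' := by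
  intro ⟨i'', hne, h1, hn, hm⟩
  exact hu ⟨i'', hne, h1, le_trans (by omega) hn,
    le_trans (mis_mono S i i'' (by omega)) hm⟩

/-- if `sus_p^k = S[i..p]` is a strict right extension of `lsus_i^k = S[i..j0]`
(`j0 < p`), then `p ≥ 2`, `S[i..p−1]` is the unique choice for `sus_{p−1}^k`, and hence
`sus_p^k` is `sus_{p−1}^k` appended with `S[p]`. -/
theorem sus_extension_structure {α : Type*} [DecidableEq α] (S : ℕ → α) (n k p i j0 : ℕ)
    (hlsus : isLSUS S n k i j0) (hj0p : j0 < p)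
    (hsus : isSUS S n k p i p) :
    2 ≤ p ∧ isSUS S n k (p - 1) i (p - 1) ∧
      ∀ i' j', isSUS S n k (p - 1) i' j' → i' = i ∧ j' = p - 1 := by

  obtain ⟨hi1, hij0, hj0n, hu0, -⟩ := hlsus
  obtain ⟨-, hip, hpp, hpn, hup, hmin⟩ := hsus
  have hp2 : 2 ≤ p := by omega
  have hup1 : kUnique S n k i (p - 1) := kUnique_extend hu0 (by omega)
  have hminP1 : ∀ i' j', 1 ≤ i' → i' ≤ p - 1 → p - 1 ≤ j' → j' ≤ n →
      kUnique S n k i' j' → (p - 1) - i ≤ j' - i' := by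
    intro i' j' h1 hi'p hpj' hj'n hu'
    by_cases hj' : p ≤ j'
    · have := hmin i' j' h1 (by omega) hj' hj'n hu'
      omega
    · have hu'' : kUnique S n k i' p := kUnique_extend hu' (by omega)
      have := hmin i' p h1 (by omega) le_rfl hpn hu''
      omega
  refine ⟨hp2, ⟨hi1, by omega, le_rfl, by omega, hup1, hminP1⟩, ?_⟩
  intro i' j' ⟨h1', hi'p, hpj', hj'n, hu', hmin'⟩
  have hlen1 : j' - i' ≤ (p - 1) - i := hmin' i (p - 1) hi1 (by omega) le_rfl (by omega) hup1
  have hlen2 : (p - 1) - i ≤ j' - i' := hminP1 i' j' h1' hi'p hpj' hj'n hu'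
  have hj'lt : j' < p := by
    by_contra hc
    push_neg at hc
    have := hmin i' j' h1' (by omega) hc hj'n hu'
    omega
  omega
end

section
/- Monotone LCP skipping: for a string S with suffix array SA and rank array, if x_i > 0 where x_i is the LCP length of suffix S[i..n] with its lexicographic predecessor suffix, then x_{i+1} ≥ x_i − 1. -/
/-- The suffix of `S` (of length `n`, positions `1..n`) starting at position `i`, as a list. -/
def sfx {α : Type*} (S : ℕ → α) (n i : ℕ) : List α :=
  (List.range (n + 1 - i)).map (fun d => S (i + d))

/-- Length of the longest common prefix of two lists. -/
def lcpLen {α : Type*} [DecidableEq α] : List α → List α → ℕ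
  | a :: as, b :: bs => if a = b then lcpLen as bs + 1 else 0
  | _, _ => 0

lemma lcpLen_comm {α : Type*} [DecidableEq α] : ∀ (u v : List α), lcpLen u v = lcpLen v u
  | [], [] => rfl
  | [], _ :: _ => rfl
  | _ :: _, [] => rfl
  | a :: as, b :: bs => by
    simp only [lcpLen]
    by_cases h : a = b
    · subst h; simp [lcpLen_comm as bs]
    · simp [h, Ne.symm h]

lemma lcpLen_le_right {α : Type*} [DecidableEq α] : ∀ (u v : List α), lcpLen u v ≤ v.length
  | [], _ => by cases ‹List α› <;> simp [lcpLen]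
  | _ :: _, [] => by simp [lcpLen]
  | a :: as, b :: bs => by
    simp only [lcpLen]
    split
    · simpa using lcpLen_le_right as bs
    · simp

lemma lex_asymm {α : Type*} [LinearOrder α] {u v : List α}
    (h : List.Lex (· < ·) u v) : ¬ List.Lex (· < ·) v u := by
  induction h with
  | nil => intro h2; cases h2
  | rel h1 => intro h2
              cases h2 with
              | rel h3 => exact absurd h1 (lt_asymm h3)
              | cons h3 => exact lt_irrefl _ h1
  | cons h1 ih => intro h2
                  cases h2 with
                  | rel h3 => exact lt_irrefl _ h3
                  | cons h3 => exact ih h3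

lemma lcpLen_mono {α : Type*} [LinearOrder α] : ∀ (u v w : List α),
    List.Lex (· < ·) u v → List.Lex (· < ·) v w → lcpLen u w ≤ lcpLen v w
  | [], _, _, _, _ => by cases ‹List α› <;> simp [lcpLen]
  | _ :: _, _, [], _, _ => by simp [lcpLen]
  | a :: as, v, c :: ws, huv, hvw => by
    match v, huv with
    | b :: vs, huv =>
      simp only [lcpLen]
      by_cases hac : a = c
      · subst hac
        cases huv with
        | rel h1 =>
          cases hvw with
          | rel h2 => exact absurd h1 (lt_asymm h2)
          | cons h2 => exact absurd h1 (lt_irrefl _)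
        | cons h1 =>
          cases hvw with
          | rel h2 => exact absurd h2 (lt_irrefl _)
          | cons h2 =>
            simp only [if_pos rfl]
            exact Nat.succ_le_succ (lcpLen_mono as vs ws h1 h2)
      · rw [if_neg hac]; exact Nat.zero_le _

lemma sfx_cons {α : Type*} (S : ℕ → α) {n i : ℕ} (h : i ≤ n) :
    sfx S n i = S i :: sfx S n (i + 1) := by
  unfold sfx
  have h1 : n + 1 - i = (n - i) + 1 := by omega
  have h2 : n + 1 - (i + 1) = n - i := by omega
  rw [h1, h2, List.range_succ_eq_map, List.map_cons, List.map_map]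
  simp only [Function.comp_def]
  congr 1
  apply List.map_congr_left
  intro d _
  congr 1
  omega

lemma sfx_length {α : Type*} (S : ℕ → α) (n i : ℕ) :
    (sfx S n i).length = n + 1 - i := by unfold sfx; rw [List.length_map, List.length_range]

/-- if `x_i > 0`, where `x_i` is the LCP length of suffix `S[i..n]`
with its lexicographic predecessor suffix, then `x_{i+1} ≥ x_i − 1`. -/
theorem lcp_with_pred_skipping {α : Type*} [LinearOrder α] (S : ℕ → α)
    (n : ℕ) (sa rnk : ℕ → ℕ) (x : ℕ → ℕ)
    (hsa : ∀ m, 1 ≤ m → m ≤ n → 1 ≤ sa m ∧ sa m ≤ n)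
    (hrnk : ∀ m, 1 ≤ m → m ≤ n → 1 ≤ rnk m ∧ rnk m ≤ n)
    (hinv : ∀ m, 1 ≤ m → m ≤ n → rnk (sa m) = m ∧ sa (rnk m) = m)
    (hsort : ∀ a b, 1 ≤ a → a < b → b ≤ n →
      List.Lex (· < ·) (sfx S n (sa a)) (sfx S n (sa b)))
    (hx : ∀ m, x m =
      if 1 < rnk m then lcpLen (sfx S n m) (sfx S n (sa (rnk m - 1))) else 0)
    (i : ℕ) (hi : 1 ≤ i) (hin : i + 1 ≤ n) (hxi : 0 < x i) :
    x i - 1 ≤ x (i + 1) := by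
  have hiN : i ≤ n := by omega
  have hri : 1 < rnk i := by
    by_contra h
    rw [hx i, if_neg h] at hxi
    exact absurd hxi (lt_irrefl 0)
  have hrib := hrnk i hi hiN
  set j := sa (rnk i - 1) with hj
  have hjb : 1 ≤ j ∧ j ≤ n := hsa (rnk i - 1) (by omega) (by omega)
  have hxi_eq : x i = lcpLen (sfx S n i) (sfx S n j) := by rw [hx i, if_pos hri]
  rw [sfx_cons S hiN, sfx_cons S hjb.2] at hxi_eq
  simp only [lcpLen] at hxi_eq
  have heq : S i = S j := by
    by_contra h
    rw [if_neg h] at hxi_eq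
    omega
  rw [if_pos heq] at hxi_eq
  -- hxi_eq : x i = lcpLen (sfx (i+1)) (sfx (j+1)) + 1
  by_cases hx2 : x i ≤ 1
  · omega
  have htail : lcpLen (sfx S n (i + 1)) (sfx S n (j + 1)) = x i - 1 := by omega
  have hj1n : j + 1 ≤ n := by
    have := lcpLen_le_right (sfx S n (i + 1)) (sfx S n (j + 1))
    rw [sfx_length] at this
    omega
  -- lex of suffixes at j and i
  have hlex0 : List.Lex (· < ·) (sfx S n j) (sfx S n i) := by
    have h := hsort (rnk i - 1) (rnk i) (by omega) (by omega) hrib.2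
    rwa [(hinv i hi hiN).2] at h
  rw [sfx_cons S hiN, sfx_cons S hjb.2] at hlex0
  rw [heq] at hlex0
  have hlex1 : List.Lex (· < ·) (sfx S n (j + 1)) (sfx S n (i + 1)) := by
    cases hlex0 with
    | rel h1 => exact absurd h1 (lt_irrefl _)
    | cons h1 => exact h1
  have hne : j + 1 ≠ i + 1 := by
    intro h
    rw [h] at hlex1
    exact lex_asymm hlex1 hlex1
  set q := rnk (j + 1) with hq
  set r := rnk (i + 1) with hr
  have hqb : 1 ≤ q ∧ q ≤ n := hrnk (j + 1) (by omega) hj1n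
  have hrb : 1 ≤ r ∧ r ≤ n := hrnk (i + 1) (by omega) hin
  have hsaq : sa q = j + 1 := (hinv (j + 1) (by omega) hj1n).2
  have hsar : sa r = i + 1 := (hinv (i + 1) (by omega) hin).2
  have hqr : q < r := by
    rcases lt_trichotomy q r with h | h | h
    · exact h
    · exact absurd (by rw [← hsaq, ← hsar, h]) hne
    · have := hsort r q hrb.1 h hqb.2
      rw [hsaq, hsar] at this
      exact absurd this (lex_asymm hlex1)
  have hr1 : 1 < r := by omega
  have hxip : x (i + 1) = lcpLen (sfx S n (i + 1)) (sfx S n (sa (r - 1))) := by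
    rw [hx (i + 1), if_pos hr1]
  by_cases hqr1 : q = r - 1
  · rw [hxip, ← hqr1, hsaq, htail]
  · have hq_lt : q < r - 1 := by omega
    have h1 : List.Lex (· < ·) (sfx S n (j + 1)) (sfx S n (sa (r - 1))) := by
      have := hsort q (r - 1) hqb.1 hq_lt (by omega)
      rwa [hsaq] at this
    have h2 : List.Lex (· < ·) (sfx S n (sa (r - 1))) (sfx S n (i + 1)) := by
      have := hsort (r - 1) r (by omega) (by omega) hrb.2
      rwa [hsar] at this
    have := lcpLen_mono (sfx S n (j + 1)) (sfx S n (sa (r - 1))) (sfx S n (i + 1)) h1 h2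
    have htail' : lcpLen (sfx S n (j + 1)) (sfx S n (i + 1)) = x i - 1 := by
      rw [lcpLen_comm]; exact htail
    rw [hxip, lcpLen_comm, ← htail']
    exact this
end
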